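/- arXiv:1701.01642 — 2 statements merged into one kernel-verified Lean document; each statement's English description precedes it below -/
import Mathlib

section
/- There exists a constant C > 0 such that for every ρ ∈ ℂ with Re(ρ) = 1/2, every x ≥ 1, and every h with 0 < h ≤ x, one has (1/h²)·|((x+2h)^{ρ+2} − 2(x+h)^{ρ+2} + x^{ρ+2}) / (ρ(ρ+1)(ρ+2))| ≤ C · min( x^{1/2}/|ρ| , x^{5/2}/(h²·|ρ|³) ). -/
/-!
Write `N = (x+2h)^{ρ+2} - 2(x+h)^{ρ+2} + x^{ρ+2}`. Applying the mean value theorem twice bounds `|N|`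
by `h²` times the sup of the second derivative `(ρ+1)(ρ+2) t^ρ` on `[x, x+2h] ⊆ [x, 3x]`, which gives
`|N / (ρ(ρ+1)(ρ+2))| ≤ (3x)^{1/2} h² / |ρ|`. Bounding the three terms of `N` trivially instead gives
`|N / (ρ(ρ+1)(ρ+2))| ≤ 4 (3x)^{5/2} / |ρ|³`, using `|ρ| ≤ |ρ + 1|, |ρ + 2|` (valid as `Re ρ ≥ 0`).
-/

open Set Complex

section SecondDifference

variable {E : Type*} [NormedAddCommGroup E] [NormedSpace ℝ E]

theorem norm_second_difference_le_of_hasDerivAt {f f' f'' : ℝ → E} {x h M : ℝ} (hh : 0 ≤ h)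
    (hf : ∀ t ∈ Icc x (x + 2 * h), HasDerivAt f (f' t) t)
    (hf' : ∀ t ∈ Icc x (x + 2 * h), HasDerivAt f' (f'' t) t)
    (hf'' : ∀ t ∈ Icc x (x + 2 * h), ‖f'' t‖ ≤ M) :
    ‖(f (x + 2 * h) - f (x + h)) - (f (x + h) - f x)‖ ≤ M * h ^ 2 := by
  have hsub : ∀ {t s : ℝ}, t ∈ Icc x (x + h) → s ∈ Icc t (t + h) → s ∈ Icc x (x + 2 * h) :=
    fun ht hs => ⟨ht.1.trans hs.1, by linarith [ht.2, hs.2]⟩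
  have hf'_diff : ∀ t ∈ Icc x (x + h), ‖f' (t + h) - f' t‖ ≤ M * h := by
    intro t ht
    simpa using norm_image_sub_le_of_norm_deriv_le_segment'
      (fun s hs => (hf' s (hsub ht hs)).hasDerivWithinAt)
      (fun s hs => hf'' s (hsub ht (Ico_subset_Icc_self hs))) (t + h) (right_mem_Icc.2 (by linarith))
  have hderiv : ∀ t ∈ Icc x (x + h),
      HasDerivWithinAt (fun t => f (t + h) - f t) (f' (t + h) - f' t) (Icc x (x + h)) t :=
    fun t ht => (((hf (t + h) (hsub ht ⟨by linarith, le_rfl⟩)).comp_add_const t h).sub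
      (hf t (hsub ht ⟨le_rfl, by linarith⟩))).hasDerivWithinAt
  have := norm_image_sub_le_of_norm_deriv_le_segment' hderiv
    (fun t ht => hf'_diff t (Ico_subset_Icc_self ht)) (x + h) (right_mem_Icc.2 (by linarith))
  rw [show x + h + h = x + 2 * h by ring] at this
  linarith

end SecondDifference

namespace Complex

theorem norm_le_norm_add_ofReal {z : ℂ} {a : ℝ} (hz : 0 ≤ z.re) (ha : 0 ≤ a) : ‖z‖ ≤ ‖z + a‖ := by
  rw [← sq_le_sq₀ (norm_nonneg _) (norm_nonneg _), Complex.sq_norm, Complex.sq_norm, normSq_apply,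
    normSq_apply]
  simp only [add_re, add_im, ofReal_re, ofReal_im, add_zero]
  nlinarith

theorem norm_ofReal_cpow_le {s b : ℝ} {σ : ℂ} (hs : 0 < s) (hsb : s ≤ b) (hσ : 0 ≤ σ.re) :
    ‖(s : ℂ) ^ σ‖ ≤ b ^ σ.re := by
  rw [norm_cpow_eq_rpow_re_of_pos hs]
  exact Real.rpow_le_rpow hs.le hsb hσ

theorem norm_ofReal_cpow_second_difference_le {σ : ℂ} {x h : ℝ} (hσ : 0 ≤ σ.re) (hx : 0 < x)
    (hh : 0 ≤ h) :
    ‖((x + 2 * h : ℝ) : ℂ) ^ (σ + 2) - 2 * ((x + h : ℝ) : ℂ) ^ (σ + 2) + (x : ℂ) ^ (σ + 2)‖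
      ≤ ‖σ + 1‖ * ‖σ + 2‖ * (x + 2 * h) ^ σ.re * h ^ 2 := by
  have hσ1 : σ + 1 ≠ 0 := ne_zero_of_re_pos (by simp; linarith)
  have hσ2 : σ + 2 ≠ 0 := ne_zero_of_re_pos (by simp; linarith)
  have hpos : ∀ t ∈ Icc x (x + 2 * h), t ≠ 0 := fun t ht => (hx.trans_le ht.1).ne'
  have hf : ∀ t ∈ Icc x (x + 2 * h), HasDerivAt (fun y : ℝ => (y : ℂ) ^ (σ + 2))
      ((σ + 2) * (t : ℂ) ^ (σ + 1)) t := fun t ht => by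
    simpa [show σ + 2 - 1 = σ + 1 by ring] using hasDerivAt_ofReal_cpow_const (hpos t ht) hσ2
  have hf' : ∀ t ∈ Icc x (x + 2 * h), HasDerivAt (fun y : ℝ => (σ + 2) * (y : ℂ) ^ (σ + 1))
      ((σ + 2) * ((σ + 1) * (t : ℂ) ^ σ)) t := fun t ht => by
    simpa using (hasDerivAt_ofReal_cpow_const (hpos t ht) hσ1).const_mul (σ + 2)
  have hf'' : ∀ t ∈ Icc x (x + 2 * h),
      ‖(σ + 2) * ((σ + 1) * (t : ℂ) ^ σ)‖ ≤ ‖σ + 1‖ * ‖σ + 2‖ * (x + 2 * h) ^ σ.re := by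
    intro t ht
    rw [norm_mul, norm_mul, ← mul_assoc, mul_comm ‖σ + 2‖]
    gcongr
    exact norm_ofReal_cpow_le (hx.trans_le ht.1) ht.2 hσ
  exact (norm_second_difference_le_of_hasDerivAt hh hf hf' hf'').trans_eq' (by congr 1; ring)

theorem norm_ofReal_cpow_second_difference_le_four_mul {σ : ℂ} {x h : ℝ} (hσ : 0 ≤ σ.re)
    (hx : 0 < x) (hh : 0 ≤ h) :
    ‖((x + 2 * h : ℝ) : ℂ) ^ σ - 2 * ((x + h : ℝ) : ℂ) ^ σ + (x : ℂ) ^ σ‖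
      ≤ 4 * (x + 2 * h) ^ σ.re := by
  have hle : ∀ s, 0 < s → s ≤ x + 2 * h → ‖(s : ℂ) ^ σ‖ ≤ (x + 2 * h) ^ σ.re :=
    fun s hs hsb => norm_ofReal_cpow_le hs hsb hσ
  have h₁ := hle (x + 2 * h) (by linarith) le_rfl
  have h₂ := hle (x + h) (by linarith) (by linarith)
  have h₃ := hle x hx (by linarith)
  calc _ ≤ ‖((x + 2 * h : ℝ) : ℂ) ^ σ‖ + ‖2 * ((x + h : ℝ) : ℂ) ^ σ‖ + ‖(x : ℂ) ^ σ‖ :=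
        norm_add_le_of_le (norm_sub_le _ _) le_rfl
    _ ≤ _ := by rw [norm_mul, Complex.norm_two]; linarith

theorem norm_ofReal_cpow_second_difference_div_le {ρ : ℂ} {x h : ℝ} (hρ : 0 < ρ.re) (hx : 0 < x)
    (hh : 0 ≤ h) :
    ‖(((x + 2 * h : ℝ) : ℂ) ^ (ρ + 2) - 2 * ((x + h : ℝ) : ℂ) ^ (ρ + 2) + (x : ℂ) ^ (ρ + 2))
      / (ρ * (ρ + 1) * (ρ + 2))‖ ≤ (x + 2 * h) ^ ρ.re * h ^ 2 / ‖ρ‖ := by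
  have hρ0 : 0 < ‖ρ‖ := norm_pos_iff.2 (ne_zero_of_re_pos hρ)
  have hρ1 : 0 < ‖ρ + 1‖ := norm_pos_iff.2 (ne_zero_of_re_pos (by simp; linarith))
  have hρ2 : 0 < ‖ρ + 2‖ := norm_pos_iff.2 (ne_zero_of_re_pos (by simp; linarith))
  calc _ ≤ ‖ρ + 1‖ * ‖ρ + 2‖ * (x + 2 * h) ^ ρ.re * h ^ 2 / (‖ρ‖ * ‖ρ + 1‖ * ‖ρ + 2‖) := by
        rw [norm_div, norm_mul, norm_mul]
        gcongr
        exact norm_ofReal_cpow_second_difference_le hρ.le hx hh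
    _ = _ := by field_simp

theorem norm_ofReal_cpow_second_difference_div_le_four_mul {ρ : ℂ} {x h : ℝ} (hρ : 0 < ρ.re)
    (hx : 0 < x) (hh : 0 ≤ h) :
    ‖(((x + 2 * h : ℝ) : ℂ) ^ (ρ + 2) - 2 * ((x + h : ℝ) : ℂ) ^ (ρ + 2) + (x : ℂ) ^ (ρ + 2))
      / (ρ * (ρ + 1) * (ρ + 2))‖ ≤ 4 * (x + 2 * h) ^ (ρ.re + 2) / ‖ρ‖ ^ 3 := by
  have hρ1 : ‖ρ‖ ≤ ‖ρ + 1‖ := by simpa using norm_le_norm_add_ofReal hρ.le zero_le_one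
  have hρ2 : ‖ρ‖ ≤ ‖ρ + 2‖ := by simpa using norm_le_norm_add_ofReal hρ.le zero_le_two
  have hρ0 : 0 < ‖ρ‖ := norm_pos_iff.2 (ne_zero_of_re_pos hρ)
  rw [norm_div, norm_mul, norm_mul, pow_three, ← mul_assoc]
  gcongr
  simpa using norm_ofReal_cpow_second_difference_le_four_mul (σ := ρ + 2) (by simp; linarith) hx hh

end Complex

theorem Real.add_two_mul_rpow_le {x h a : ℝ} (hx : 0 ≤ x) (hh : 0 ≤ h) (hhx : h ≤ x) (ha : 0 ≤ a) :
    (x + 2 * h) ^ a ≤ 3 ^ a * x ^ a := by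
  rw [← Real.mul_rpow (by norm_num) hx]
  exact Real.rpow_le_rpow (by positivity) (by linarith) ha

/-- the min-bound on the normalized second difference of
`t ↦ t^{ρ+2}/(ρ(ρ+1)(ρ+2))` for `Re ρ = 1/2`, `x ≥ 1`, `0 < h ≤ x`. -/
theorem stmt5 : ∃ C > (0:ℝ), ∀ ρ : ℂ, ρ.re = 1/2 → ∀ x : ℝ, 1 ≤ x →
    ∀ h : ℝ, 0 < h → h ≤ x →
    (1/h^2) * ‖(((x + 2*h : ℝ) : ℂ) ^ (ρ + 2)
        - 2 * ((x + h : ℝ) : ℂ) ^ (ρ + 2) + (x : ℂ) ^ (ρ + 2))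
      / (ρ * (ρ + 1) * (ρ + 2))‖
      ≤ C * min (x ^ ((1:ℝ)/2) / ‖ρ‖)
          (x ^ ((5:ℝ)/2) / (h^2 * ‖ρ‖ ^ 3)) := by
  refine ⟨4 * 3 ^ ((5:ℝ)/2), by positivity, fun ρ hρ x hx h hh hhx => ?_⟩
  have hx0 : 0 < x := by linarith
  have hρ0 : 0 < ρ.re := by rw [hρ]; norm_num
  have hsmall := norm_ofReal_cpow_second_difference_div_le hρ0 hx0 hh.le
  have hlarge := norm_ofReal_cpow_second_difference_div_le_four_mul hρ0 hx0 hh.le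
  rw [hρ] at hsmall hlarge
  rw [show (1 : ℝ) / 2 + 2 = 5 / 2 by norm_num] at hlarge
  have hρn : 0 < ‖ρ‖ := norm_pos_iff.2 (ne_zero_of_re_pos hρ0)
  rw [mul_min_of_nonneg _ _ (by positivity), le_min_iff]
  constructor
  · calc _ ≤ 1 / h ^ 2 * ((x + 2 * h) ^ ((1:ℝ)/2) * h ^ 2 / ‖ρ‖) := by gcongr
      _ = (x + 2 * h) ^ ((1:ℝ)/2) / ‖ρ‖ := by field_simp
      _ ≤ 3 ^ ((1:ℝ)/2) * (x ^ ((1:ℝ)/2) / ‖ρ‖) := by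
          rw [← mul_div_assoc]
          gcongr
          exact Real.add_two_mul_rpow_le hx0.le hh.le hhx (by norm_num)
      _ ≤ _ := by
          gcongr
          calc (3 : ℝ) ^ ((1:ℝ)/2) ≤ 3 ^ ((5:ℝ)/2) :=
                Real.rpow_le_rpow_of_exponent_le (by norm_num) (by norm_num)
            _ ≤ 4 * 3 ^ ((5:ℝ)/2) := le_mul_of_one_le_left (by positivity) (by norm_num)
  · calc _ ≤ 1 / h ^ 2 * (4 * (x + 2 * h) ^ ((5:ℝ)/2) / ‖ρ‖ ^ 3) := by gcongr
      _ ≤ 1 / h ^ 2 * (4 * (3 ^ ((5:ℝ)/2) * x ^ ((5:ℝ)/2)) / ‖ρ‖ ^ 3) := by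
          gcongr
          exact Real.add_two_mul_rpow_le hx0.le hh.le hhx (by norm_num)
      _ = _ := by field_simp
end

section
/- Let (γ_n)_{n≥1} be a sequence of real numbers with γ_n ≥ 1 and #{n : γ_n ≤ T} ≤ C·T² for all T ≥ 1, where C > 0, and write ρ_n = 1/2 + iγ_n. Then there is a constant C' > 0 (depending only on C) such that for all x ≥ 1, h > 0 and Y ≥ 1, (1/h)·| Σ_{n : γ_n ≤ Y} ((x+h)^{ρ_n+1} − x^{ρ_n+1}) / (ρ_n(ρ_n+1)) | ≤ C'·(x+h)^{1/2}·Y. -/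
/-!
Each term is a difference of `t ↦ t ^ (ρ + 1)` over `[x, x + h]`, so by the mean value theorem it
is at most `h (x + h) ^ (1/2) |ρ + 1| / |ρ (ρ + 1)| ≤ h (x + h) ^ (1/2) / γ`. It remains to bound
`∑_{γ n ≤ Y} 1 / γ n`: splitting into dyadic ranges `2 ^ k < γ ≤ 2 ^ (k + 1)`, the range contributes
at most `C 4 ^ (k + 1) / 2 ^ k = 4 C 2 ^ k`, a geometric series dominated by its last term.
-/

open Complex Set

lemma norm_ofReal_cpow_sub_le {s : ℂ} (hs : 1 ≤ s.re) {x h : ℝ} (hx : 0 < x) (hh : 0 ≤ h) :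
    ‖((x + h : ℝ) : ℂ) ^ s - (x : ℂ) ^ s‖ ≤ ‖s‖ * (x + h) ^ (s.re - 1) * h := by
  have hderiv : ∀ t ∈ Icc x (x + h),
      HasDerivWithinAt (fun t : ℝ => (t : ℂ) ^ s) (s * (t : ℂ) ^ (s - 1)) (Icc x (x + h)) t :=
    fun t ht => ((hasStrictDerivAt_cpow_const (ofReal_mem_slitPlane.2 (hx.trans_le ht.1))
      ).hasDerivAt.comp_ofReal).hasDerivWithinAt
  have hbound : ∀ t ∈ Ico x (x + h), ‖s * (t : ℂ) ^ (s - 1)‖ ≤ ‖s‖ * (x + h) ^ (s.re - 1) := by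
    intro t ht
    have ht0 : 0 < t := hx.trans_le ht.1
    rw [norm_mul, norm_cpow_eq_rpow_re_of_pos ht0, sub_re, one_re]
    exact mul_le_mul_of_nonneg_left (Real.rpow_le_rpow ht0.le ht.2.le (by linarith)) (norm_nonneg s)
  simpa using norm_image_sub_le_of_norm_deriv_le_segment' hderiv hbound (x + h)
    ⟨by linarith, le_rfl⟩

lemma norm_cpow_sub_div_le {γ : ℝ} (hγ : 0 < γ) {x h : ℝ} (hx : 0 < x) (hh : 0 ≤ h) :
    ‖(((x + h : ℝ) : ℂ) ^ ((1/2 + γ * I) + 1) - (x : ℂ) ^ ((1/2 + γ * I) + 1)) /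
        ((1/2 + γ * I) * ((1/2 + γ * I) + 1))‖ ≤ h * (x + h) ^ ((1:ℝ)/2) / γ := by
  set ρ : ℂ := 1/2 + γ * I
  have hre : (ρ + 1).re = 3/2 := by norm_num [ρ]
  have hγρ : γ ≤ ‖ρ‖ := by
    simpa [ρ, abs_of_pos hγ] using abs_im_le_norm ρ
  have hρ : 0 < ‖ρ‖ := hγ.trans_le hγρ
  have hρ1 : 0 < ‖ρ + 1‖ := norm_pos_iff.2 fun h0 => by norm_num [h0] at hre
  have hmvt := norm_ofReal_cpow_sub_le (s := ρ + 1) (by rw [hre]; norm_num) hx hh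
  rw [hre, show (3:ℝ)/2 - 1 = 1/2 by norm_num] at hmvt
  rw [norm_div, norm_mul, div_le_div_iff₀ (mul_pos hρ hρ1) hγ]
  calc _ ≤ ‖ρ + 1‖ * (x + h) ^ ((1:ℝ)/2) * h * γ := by gcongr
    _ ≤ ‖ρ + 1‖ * (x + h) ^ ((1:ℝ)/2) * h * ‖ρ‖ := by gcongr
    _ = _ := by ring

def HasQuadraticCount {ι : Type*} (C : ℝ) (γ : ι → ℝ) : Prop :=
  ∀ T ≥ (1:ℝ), ∀ s : Finset ι, (∀ n ∈ s, γ n ≤ T) → (s.card : ℝ) ≤ C * T ^ 2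

namespace HasQuadraticCount

variable {ι : Type*} {C : ℝ} {γ : ι → ℝ}

lemma finite_setOf_le (hcount : HasQuadraticCount C γ) {Y : ℝ} (hY : 1 ≤ Y) :
    {n | γ n ≤ Y}.Finite := by
  refine Set.not_infinite.1 fun hinf => ?_
  obtain ⟨s, hs, hcard⟩ := hinf.exists_subset_card_eq (⌈C * Y ^ 2⌉₊ + 1)
  have := hcount Y hY s hs
  rw [hcard, Nat.cast_add_one] at this
  linarith [Nat.le_ceil (C * Y ^ 2)]

lemma sum_one_div_le_of_le_two_pow (hcount : HasQuadraticCount C γ) (hC : 0 ≤ C)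
    (hγ1 : ∀ n, 1 ≤ γ n) (m : ℕ) (s : Finset ι) (hs : ∀ n ∈ s, γ n ≤ 2 ^ m) :
    ∑ n ∈ s, 1 / γ n ≤ 8 * C * 2 ^ m := by
  induction m generalizing s with
  | zero =>
    have hcard : (s.card : ℝ) ≤ C := by simpa using hcount 1 le_rfl s (by simpa using hs)
    have hsum : ∑ n ∈ s, 1 / γ n ≤ s.card := by
      simpa using Finset.sum_le_sum fun n _ => (div_le_one (by linarith [hγ1 n])).2 (hγ1 n)
    simp only [pow_zero, mul_one]
    linarith
  | succ m ih =>
    rw [← Finset.sum_filter_add_sum_filter_not s (fun n => γ n ≤ 2 ^ m)]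
    set t := s.filter (fun n => ¬ γ n ≤ 2 ^ m)
    have hlow := ih (s.filter (fun n => γ n ≤ 2 ^ m)) fun n hn => (Finset.mem_filter.1 hn).2
    have hcard : (t.card : ℝ) ≤ C * (2 ^ (m + 1)) ^ 2 :=
      hcount _ (one_le_pow₀ (by norm_num)) t fun n hn => hs n (Finset.mem_filter.1 hn).1
    have hhigh : ∑ n ∈ t, 1 / γ n ≤ ∑ _n ∈ t, 1 / (2:ℝ) ^ m := Finset.sum_le_sum fun n hn =>
      one_div_le_one_div_of_le (by positivity) (not_le.1 (Finset.mem_filter.1 hn).2).le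
    have htop : ∑ _n ∈ t, 1 / (2:ℝ) ^ m ≤ 4 * C * 2 ^ m := by
      rw [Finset.sum_const, nsmul_eq_mul, mul_one_div, div_le_iff₀ (by positivity)]
      exact hcard.trans_eq (by ring)
    rw [pow_succ]
    linarith [mul_nonneg hC (pow_nonneg zero_le_two m)]

lemma sum_one_div_le (hcount : HasQuadraticCount C γ) (hC : 0 ≤ C) (hγ1 : ∀ n, 1 ≤ γ n)
    {Y : ℝ} (hY : 1 ≤ Y) (s : Finset ι) (hs : ∀ n ∈ s, γ n ≤ Y) :
    ∑ n ∈ s, 1 / γ n ≤ 16 * C * Y := by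
  obtain ⟨m, hmY, hYm⟩ := exists_nat_pow_near hY (by norm_num : (1:ℝ) < 2)
  calc ∑ n ∈ s, 1 / γ n ≤ 8 * C * 2 ^ (m + 1) :=
        hcount.sum_one_div_le_of_le_two_pow hC hγ1 (m + 1) s fun n hn => (hs n hn).trans hYm.le
    _ = 16 * C * 2 ^ m := by ring
    _ ≤ 16 * C * Y := by gcongr

end HasQuadraticCount

/-- contribution of the low-lying zeros `ρ n = 1/2 + i γ n` with
`γ n ≤ Y` to the first difference of the explicit formula. -/
theorem stmt10 (C : ℝ) (hC : 0 < C) (γ : ℕ → ℝ) (hγ1 : ∀ n, 1 ≤ γ n)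
    (hcount : ∀ T ≥ (1:ℝ), ∀ s : Finset ℕ, (∀ n ∈ s, γ n ≤ T) → (s.card : ℝ) ≤ C * T^2) :
    ∃ C' > (0:ℝ), ∀ x ≥ (1:ℝ), ∀ h : ℝ, 0 < h → ∀ Y ≥ (1:ℝ),
      (1/h) * ‖(∑' n : ℕ, if γ n ≤ Y then
          (((x + h : ℝ) : ℂ) ^ ((1/2 + γ n * Complex.I) + 1)
            - (x : ℂ) ^ ((1/2 + γ n * Complex.I) + 1)) /
          ((1/2 + γ n * Complex.I) * ((1/2 + γ n * Complex.I) + 1))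
        else 0)‖
      ≤ C' * (x + h) ^ ((1:ℝ)/2) * Y := by
  refine ⟨16 * C, by positivity, fun x hx h hh Y hY => ?_⟩
  set S := (HasQuadraticCount.finite_setOf_le hcount hY).toFinset
  have hS : ∀ n ∈ S, γ n ≤ Y := fun n hn => by simpa [S] using hn
  rw [tsum_eq_sum (s := S) fun n hn => if_neg (by simpa [S] using hn),
    Finset.sum_congr rfl fun n hn => if_pos (hS n hn)]
  calc (1/h) * ‖∑ n ∈ S, _‖
      ≤ (1/h) * ∑ n ∈ S, h * (x + h) ^ ((1:ℝ)/2) / γ n := by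
        gcongr
        refine (norm_sum_le _ _).trans (Finset.sum_le_sum fun n _ => ?_)
        exact norm_cpow_sub_div_le (by linarith [hγ1 n]) (by linarith) hh.le
    _ = (x + h) ^ ((1:ℝ)/2) * ∑ n ∈ S, 1 / γ n := by
        rw [Finset.mul_sum, Finset.mul_sum]
        exact Finset.sum_congr rfl fun n _ => by field_simp
    _ ≤ (x + h) ^ ((1:ℝ)/2) * (16 * C * Y) := by
        gcongr
        exact HasQuadraticCount.sum_one_div_le hcount hC.le hγ1 hY S hS
    _ = 16 * C * (x + h) ^ ((1:ℝ)/2) * Y := by ring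
end
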